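/- arXiv:2208.06342 — 3 statements merged into one kernel-verified Lean document; each statement's English description precedes it below -/
import Mathlib

section
/- Let T be a discrete random variable with pmf f and CDF F, and let U be uniform on [0,1] independent of T. Then the randomized p-value P = (1 - F(T)) + U·f(T) is uniformly distributed on [0,1]. -/
open MeasureTheory Set ProbabilityTheory

lemma vol_Ico_inter_Iic (a b t : ℝ) :
    volume (Ico a b ∩ Iic t) = ENNReal.ofReal (min b t - a) := by
  have h1 : Ico a (min b t) ⊆ Ico a b ∩ Iic t := fun u hu =>
    ⟨⟨hu.1, lt_of_lt_of_le hu.2 (min_le_left _ _)⟩,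
      le_of_lt (lt_of_lt_of_le hu.2 (min_le_right _ _))⟩
  have h2 : Ico a b ∩ Iic t ⊆ Icc a (min b t) := fun u hu =>
    ⟨hu.1.1, le_min hu.1.2.le hu.2⟩
  refine le_antisymm ?_ ?_
  · calc volume (Ico a b ∩ Iic t) ≤ volume (Icc a (min b t)) := measure_mono h2
      _ = ENNReal.ofReal (min b t - a) := Real.volume_Icc
  · calc ENNReal.ofReal (min b t - a) = volume (Ico a (min b t)) := Real.volume_Ico.symm
      _ ≤ volume (Ico a b ∩ Iic t) := measure_mono h1

/-- For a discrete random variable `T` with pmf `f` and CDF `F`, and `U` uniform on `[0,1]`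
independent of `T`, the randomized p-value `P = (1 - F(T)) + U·f(T)` is uniformly
distributed on `[0,1]`. -/
theorem stmt_1 {Ω : Type*} [MeasurableSpace Ω] (μ : Measure Ω) [IsProbabilityMeasure μ]
    (T : Ω → ℝ) (hT : Measurable T) (hTdisc : (Set.range T).Countable)
    (f F : ℝ → ℝ)
    (hf : ∀ x, f x = (μ {ω | T ω = x}).toReal)
    (hF : ∀ x, F x = (μ {ω | T ω ≤ x}).toReal)
    (U : Ω → ℝ) (hU : Measurable U)
    (hUunif : μ.map U = volume.restrict (Icc (0:ℝ) 1))
    (hindep : IndepFun T U μ)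
    (P : Ω → ℝ) (hP : ∀ ω, P ω = (1 - F (T ω)) + U ω * f (T ω)) :
    ∀ t ∈ Icc (0:ℝ) 1, μ {ω | P ω ≤ t} = ENNReal.ofReal t := by
  intro t ht
  set S : Set ℝ := Set.range T with hS
  set g : ℝ → ℝ := fun x => 1 - F x with hg
  -- basic facts
  have hf0 : ∀ x, 0 ≤ f x := fun x => (hf x) ▸ ENNReal.toReal_nonneg
  have hF1 : ∀ x, F x ≤ 1 := by
    intro x
    rw [hF]
    have := ENNReal.toReal_mono (ENNReal.one_ne_top) (prob_le_one (μ := μ) (s := {ω | T ω ≤ x}))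
    simpa using this
  have hg0 : ∀ x, 0 ≤ g x := fun x => by simp [hg]; linarith [hF1 x]
  have hfF : ∀ x, f x ≤ F x := by
    intro x
    rw [hf, hF]
    exact ENNReal.toReal_mono (measure_ne_top μ _)
      (measure_mono (fun ω (h : T ω = x) => le_of_eq h))
  have hgf1 : ∀ x, g x + f x ≤ 1 := fun x => by
    have := hfF x; simp [hg]; linarith
  -- key monotonicity: intervals tile downward
  have hkey : ∀ x y : ℝ, x < y → g y + f y ≤ g x := by
    intro x y hxy
    have hBy : MeasurableSet {ω | T ω = y} := hT (measurableSet_singleton y)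
    have hd : Disjoint {ω | T ω ≤ x} {ω | T ω = y} := by
      rw [Set.disjoint_left]
      intro ω h1 h2
      simp only [mem_setOf_eq] at h1 h2
      rw [h2] at h1; exact absurd h1 (not_le.mpr hxy)
    have hsub : {ω | T ω ≤ x} ∪ {ω | T ω = y} ⊆ {ω | T ω ≤ y} := by
      rintro ω (h | h)
      · exact le_of_lt (lt_of_le_of_lt h hxy)
      · exact le_of_eq h
    have hFfF : F x + f y ≤ F y := by
      rw [hF, hf, hF]
      have h1 : (μ {ω | T ω ≤ x}).toReal + (μ {ω | T ω = y}).toReal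
          = (μ ({ω | T ω ≤ x} ∪ {ω | T ω = y})).toReal := by
        rw [measure_union hd hBy, ENNReal.toReal_add (measure_ne_top μ _) (measure_ne_top μ _)]
      rw [h1]
      exact ENNReal.toReal_mono (measure_ne_top μ _) (measure_mono hsub)
    simp only [hg]; linarith
  -- decompose the event
  have hA : {ω | P ω ≤ t}
      = ⋃ x ∈ S, (T ⁻¹' {x} ∩ U ⁻¹' {u | 1 - F x + u * f x ≤ t}) := by
    ext ω
    simp only [mem_setOf_eq, mem_iUnion, mem_inter_iff, mem_preimage, mem_singleton_iff,
      exists_prop]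
    constructor
    · intro h
      refine ⟨T ω, ⟨ω, rfl⟩, rfl, ?_⟩
      rw [hP] at h; exact h
    · rintro ⟨x, _, hx, h⟩
      rw [hP, hx]; exact h
  have hAmeas : ∀ x : ℝ, MeasurableSet {u : ℝ | 1 - F x + u * f x ≤ t} :=
    fun x => measurableSet_le (measurable_const.add (measurable_id.mul_const _)) measurable_const
  -- per-term computation
  have hterm : ∀ x : ℝ,
      μ (T ⁻¹' {x} ∩ U ⁻¹' {u | 1 - F x + u * f x ≤ t})
        = volume (Ico (g x) (g x + f x) ∩ Iic t) := by
    intro x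
    rw [hindep.measure_inter_preimage_eq_mul _ _ (measurableSet_singleton x) (hAmeas x)]
    have hUA : μ (U ⁻¹' {u | 1 - F x + u * f x ≤ t})
        = volume ({u | 1 - F x + u * f x ≤ t} ∩ Icc 0 1) := by
      rw [← Measure.map_apply hU (hAmeas x), hUunif, Measure.restrict_apply (hAmeas x)]
    have hTx : μ (T ⁻¹' {x}) = ENNReal.ofReal (f x) := by
      have : T ⁻¹' {x} = {ω | T ω = x} := rfl
      rw [this, hf, ENNReal.ofReal_toReal (measure_ne_top μ _)]
    rw [hUA, hTx]
    rcases eq_or_lt_of_le (hf0 x) with h0 | hpos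
    · rw [← h0]
      simp [← h0]
    · have hAset : {u : ℝ | 1 - F x + u * f x ≤ t} = Iic ((t - g x) / f x) := by
        ext u
        simp only [mem_setOf_eq, mem_Iic, hg]
        rw [le_div_iff₀ hpos]
        constructor <;> intro h <;> linarith
      have hIcc : Iic ((t - g x) / f x) ∩ Icc (0:ℝ) 1 = Icc 0 (min ((t - g x) / f x) 1) := by
        ext u
        simp only [mem_inter_iff, mem_Iic, mem_Icc, le_min_iff]
        tauto
      rw [hAset, hIcc, Real.volume_Icc, vol_Ico_inter_Iic]
      rw [← ENNReal.ofReal_mul (hf0 x)]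
      congr 1
      have h1 : f x * (min ((t - g x) / f x) 1 - 0)
          = min (f x * ((t - g x) / f x)) (f x * 1) := by
        rw [sub_zero, mul_min_of_nonneg _ _ (hf0 x)]
      rw [h1, mul_div_cancel₀ _ hpos.ne', mul_one]
      rw [← min_sub_sub_right, add_sub_cancel_left, min_comm]
  -- disjointness of the intervals
  have hdisjI : S.PairwiseDisjoint (fun x => Ico (g x) (g x + f x)) := by
    intro x _ y _ hxy
    simp only [Function.onFun]
    rcases lt_or_gt_of_ne hxy with h | h
    · have := hkey x y h
      rw [Set.disjoint_left]
      intro u hu1 hu2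
      exact absurd hu2.2 (not_lt.mpr (le_trans this hu1.1))
    · have := hkey y x h
      rw [Set.disjoint_left]
      intro u hu1 hu2
      exact absurd hu1.2 (not_lt.mpr (le_trans this hu2.1))
  have hdisj2 : S.PairwiseDisjoint (fun x => Ico (g x) (g x + f x) ∩ Iic t) :=
    hdisjI.mono (fun x => inter_subset_left)
  have hdisjT : S.PairwiseDisjoint (fun x => T ⁻¹' {x} ∩ U ⁻¹' {u | 1 - F x + u * f x ≤ t}) := by
    intro x _ y _ hxy
    simp only [Function.onFun]
    refine Disjoint.mono inter_subset_left inter_subset_left ?_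
    rw [Set.disjoint_left]
    intro ω h1 h2
    rw [mem_preimage, mem_singleton_iff] at h1 h2
    exact hxy (h1 ▸ h2 ▸ rfl)
  -- the union of intervals has full measure in [0,1)
  set W : Set ℝ := ⋃ x ∈ S, Ico (g x) (g x + f x) with hW
  have hWm : MeasurableSet W := MeasurableSet.biUnion hTdisc (fun x _ => measurableSet_Ico)
  have hWsub : W ⊆ Ico 0 1 := by
    refine iUnion₂_subset fun x _ u hu => ?_
    exact ⟨le_trans (hg0 x) hu.1, lt_of_lt_of_le hu.2 (hgf1 x)⟩
  have hWvol : volume W = 1 := by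
    rw [hW, measure_biUnion hTdisc hdisjI (fun x _ => measurableSet_Ico)]
    have h1 : ∀ x : S, volume (Ico (g x) (g x + f x)) = μ (T ⁻¹' {(x : ℝ)}) := by
      intro x
      rw [Real.volume_Ico, add_sub_cancel_left, hf, ENNReal.ofReal_toReal (measure_ne_top μ _)]
      rfl
    rw [tsum_congr h1, ← measure_biUnion hTdisc
      (fun x _ y _ hxy => by
        simp only [Function.onFun]
        rw [Set.disjoint_left]; intro ω h1 h2
        rw [mem_preimage, mem_singleton_iff] at h1 h2
        exact hxy (h1 ▸ h2 ▸ rfl))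
      (fun x _ => hT (measurableSet_singleton x))]
    have : (⋃ x ∈ S, T ⁻¹' {x}) = univ := by
      ext ω
      simp only [mem_iUnion, mem_preimage, mem_singleton_iff, mem_univ, iff_true, exists_prop]
      exact ⟨T ω, ⟨ω, rfl⟩, rfl⟩
    rw [this, measure_univ]
  have hWnull : volume (Ico (0:ℝ) 1 \ W) = 0 := by
    rw [measure_diff hWsub hWm.nullMeasurableSet (by rw [hWvol]; exact ENNReal.one_ne_top),
      hWvol, Real.volume_Ico]
    norm_num
  -- main computation
  rw [hA, measure_biUnion hTdisc hdisjT
    (fun x _ => (hT (measurableSet_singleton x)).inter (hU (hAmeas x)))]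
  rw [tsum_congr (fun x : S => hterm (x : ℝ))]
  rw [← measure_biUnion hTdisc hdisj2 (fun x _ => measurableSet_Ico.inter measurableSet_Iic)]
  have hUW : (⋃ x ∈ S, (Ico (g x) (g x + f x) ∩ Iic t)) = W ∩ Iic t := by
    ext u
    simp only [hW, mem_iUnion, mem_inter_iff, exists_prop]
    tauto
  rw [hUW]
  have htarget : volume (Ico (0:ℝ) 1 ∩ Iic t) = ENNReal.ofReal t := by
    rw [vol_Ico_inter_Iic, min_eq_right ht.2, sub_zero]
  refine le_antisymm ?_ ?_
  · calc volume (W ∩ Iic t) ≤ volume (Ico 0 1 ∩ Iic t) :=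
        measure_mono (inter_subset_inter_left _ hWsub)
      _ = ENNReal.ofReal t := htarget
  · calc ENNReal.ofReal t = volume (Ico (0:ℝ) 1 ∩ Iic t) := htarget.symm
      _ ≤ volume ((W ∩ Iic t) ∪ (Ico (0:ℝ) 1 \ W)) := by
          refine measure_mono ?_
          rintro u ⟨hu1, hu2⟩
          by_cases h : u ∈ W
          · exact Or.inl ⟨h, hu2⟩
          · exact Or.inr ⟨hu1, h⟩
      _ ≤ volume (W ∩ Iic t) + volume (Ico (0:ℝ) 1 \ W) := measure_union_le _ _
      _ = volume (W ∩ Iic t) := by rw [hWnull, add_zero]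
end

section
/- Let P be a [0,1]-valued random variable under a probability measure μ, let c ∈ (0,1], let c* ∈ (0, c] be a constant, and let U be uniform on [0,1] independent of P. Define the single-stage randomized p-value P1 = U·1{P ≥ c} + (P/c*)·1{P < c}. If μ(P ≤ t·c*) ≤ t·μ(P ≤ c*) for all t ∈ [0,1] and μ(P < c) = μ(P ≤ c*), then μ(P1 ≤ t) ≤ t for all t ∈ [0,1]. -/
/-!
On `{P < c}` the randomized p-value is `P / c*`, whose level sets are controlled by the validity
of `P` at the support point `c*`; since `μ(P < c) = μ(P ≤ c*)` this contributes at most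
`t · μ(P < c)`. On `{P ≥ c}` it is `U`, which is independent of `P`, so this contributes exactly
`t · μ(P ≥ c)`. The two contributions add up to `t`.
-/

open MeasureTheory Set ProbabilityTheory

section

variable {Ω : Type*} [MeasurableSpace Ω] {μ : Measure Ω}

lemma measure_ite_le [IsProbabilityMeasure μ] {A B C : Set Ω} {r : ENNReal}
    (hA : MeasurableSet A) (hB : μ (B ∩ A) ≤ r * μ A) (hC : μ (C \ A) ≤ r * μ Aᶜ) :
    μ (A.ite B C) ≤ r :=
  calc μ (A.ite B C) ≤ μ (B ∩ A) + μ (C \ A) := measure_union_le _ _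
    _ ≤ r * μ A + r * μ Aᶜ := add_le_add hB hC
    _ = r := by rw [← mul_add, measure_add_measure_compl hA, measure_univ, mul_one]

lemma measure_le_eq_ofReal_of_map_eq_uniform {U : Ω → ℝ} (hU : Measurable U)
    (hunif : μ.map U = volume.restrict (Icc 0 1)) {t : ℝ} (ht : t ≤ 1) :
    μ {ω | U ω ≤ t} = ENNReal.ofReal t := by
  have hIic : Iic t ∩ Icc (0 : ℝ) 1 = Icc 0 t := by
    ext x
    simp only [mem_inter_iff, mem_Iic, mem_Icc]
    grind
  change μ (U ⁻¹' Iic t) = _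
  rw [← Measure.map_apply hU measurableSet_Iic, hunif,
    Measure.restrict_apply measurableSet_Iic, hIic, Real.volume_Icc, sub_zero]

lemma measure_le_diff_eq_of_indepFun {P U : Ω → ℝ} (hindep : IndepFun P U μ) (c t : ℝ) :
    μ ({ω | U ω ≤ t} \ {ω | P ω < c}) = μ {ω | U ω ≤ t} * μ {ω | P ω < c}ᶜ := by
  rw [sdiff_eq]
  exact hindep.symm.measure_inter_preimage_eq_mul (Iic t) (Iio c)ᶜ
    measurableSet_Iic measurableSet_Iio.compl

end

theorem stmt_5_general {Ω : Type*} [MeasurableSpace Ω] (μ : Measure Ω) [IsProbabilityMeasure μ]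
    (P : Ω → ℝ) (hPmeas : Measurable P)
    (c : ℝ)
    (cstar : ℝ) (hcstar : cstar ∈ Ioc (0:ℝ) c)
    (U : Ω → ℝ) (hUmeas : Measurable U)
    (hUunif : μ.map U = volume.restrict (Icc (0:ℝ) 1))
    (hindep : IndepFun P U μ)
    (hvalid : ∀ t ∈ Icc (0:ℝ) 1,
      μ {ω | P ω ≤ t * cstar} ≤ ENNReal.ofReal t * μ {ω | P ω ≤ cstar})
    (hsupp : μ {ω | P ω < c} = μ {ω | P ω ≤ cstar})
    (P1 : Ω → ℝ)
    (hP1 : ∀ ω, P1 ω = if P ω < c then P ω / cstar else U ω) :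
    ∀ t ∈ Icc (0:ℝ) 1, μ {ω | P1 ω ≤ t} ≤ ENNReal.ofReal t := by
  intro t ht
  have hlevel : {ω | P1 ω ≤ t} = {ω | P ω < c}.ite {ω | P ω ≤ t * cstar} {ω | U ω ≤ t} := by
    ext ω
    by_cases h : P ω < c <;> simp [Set.ite, hP1, h, div_le_iff₀ hcstar.1]
  rw [hlevel]
  refine measure_ite_le (hPmeas measurableSet_Iio) ?_ ?_
  · calc μ ({ω | P ω ≤ t * cstar} ∩ {ω | P ω < c})
        ≤ μ {ω | P ω ≤ t * cstar} := measure_mono inter_subset_left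
      _ ≤ ENNReal.ofReal t * μ {ω | P ω ≤ cstar} := hvalid t ht
      _ = ENNReal.ofReal t * μ {ω | P ω < c} := by rw [hsupp]
  · rw [measure_le_diff_eq_of_indepFun hindep,
      measure_le_eq_ofReal_of_map_eq_uniform hUmeas hUunif ht.2]

/-- Validity of the (modified) single-stage randomized p-value
`P1 = U·1{P ≥ c} + (P/c*)·1{P < c}`. -/
theorem stmt_5 {Ω : Type*} [MeasurableSpace Ω] (μ : Measure Ω) [IsProbabilityMeasure μ]
    (P : Ω → ℝ) (hPmeas : Measurable P) (hrange : ∀ ω, P ω ∈ Icc (0:ℝ) 1)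
    (c : ℝ) (hc : c ∈ Ioc (0:ℝ) 1)
    (cstar : ℝ) (hcstar : cstar ∈ Ioc (0:ℝ) c)
    (U : Ω → ℝ) (hUmeas : Measurable U)
    (hUunif : μ.map U = volume.restrict (Icc (0:ℝ) 1))
    (hindep : IndepFun P U μ)
    (hvalid : ∀ t ∈ Icc (0:ℝ) 1,
      μ {ω | P ω ≤ t * cstar} ≤ ENNReal.ofReal t * μ {ω | P ω ≤ cstar})
    (hsupp : μ {ω | P ω < c} = μ {ω | P ω ≤ cstar})
    (P1 : Ω → ℝ)
    (hP1 : ∀ ω, P1 ω = if P ω < c then P ω / cstar else U ω) :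
    ∀ t ∈ Icc (0:ℝ) 1, μ {ω | P1 ω ≤ t} ≤ ENNReal.ofReal t :=
  stmt_5_general μ P hPmeas c cstar hcstar U hUmeas hUunif hindep hvalid hsupp P1 hP1
end

section
/- Let T ~ Bin(n, θ) and let U ~ UNI[0,1] be independent of T. Fix a reference parameter θ* ∈ (0,1) with CDF F_{θ*} and pmf f_{θ*}. Then the randomized p-value P = (1 - F_{θ*}(T)) + U·f_{θ*}(T) has CDF Prob_θ(P ≤ t) = 1 - F_θ(y(t)) + g(t)·f_θ(y(t)), where y(t) = F_{θ*}^{-1}(1-t) (generalized inverse) and g(t) = (F_{θ*}(y(t)) - (1-t))/f_{θ*}(y(t)), for all t ∈ (0,1). -/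
open MeasureTheory Set ProbabilityTheory

/-- The binomial pmf with `n` trials and success probability `θ`. -/
def binPMF (n : ℕ) (θ : ℝ) (k : ℕ) : ℝ := (n.choose k : ℝ) * θ ^ k * (1 - θ) ^ (n - k)

/-- The binomial CDF with `n` trials and success probability `θ`. -/
def binCDF (n : ℕ) (θ : ℝ) (k : ℕ) : ℝ := ∑ j ∈ Finset.range (k + 1), binPMF n θ j

/-- Generalized inverse `y(t) = F_{θ*}^{-1}(1-t) = inf {k : F_{θ*}(k) ≥ 1 - t}`. -/
noncomputable def binQuant (n : ℕ) (θstar : ℝ) (t : ℝ) : ℕ :=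
  sInf {k : ℕ | 1 - t ≤ binCDF n θstar k}

/-- `g(t) = (F_{θ*}(y(t)) - (1-t)) / f_{θ*}(y(t))`. -/
noncomputable def binG (n : ℕ) (θstar : ℝ) (t : ℝ) : ℝ :=
  (binCDF n θstar (binQuant n θstar t) - (1 - t)) / binPMF n θstar (binQuant n θstar t)

lemma binPMF_nonneg {n k : ℕ} {θ : ℝ} (h0 : 0 ≤ θ) (h1 : θ ≤ 1) : 0 ≤ binPMF n θ k := by
  unfold binPMF
  have : (0:ℝ) ≤ 1 - θ := by linarith
  positivity

lemma binPMF_pos {n k : ℕ} {θ : ℝ} (hk : k ≤ n) (h : θ ∈ Ioo (0:ℝ) 1) : 0 < binPMF n θ k := by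
  unfold binPMF
  have h1 : (0:ℝ) < 1 - θ := by linarith [h.2]
  have h2 : 0 < n.choose k := Nat.choose_pos hk
  have h3 : (0:ℝ) < n.choose k := by exact_mod_cast h2
  have h4 : (0:ℝ) < θ := h.1
  positivity

lemma binPMF_zero {n k : ℕ} {θ : ℝ} (hk : n < k) : binPMF n θ k = 0 := by
  unfold binPMF
  rw [Nat.choose_eq_zero_of_lt hk]
  simp

lemma binCDF_mono {n : ℕ} {θ : ℝ} (h0 : 0 ≤ θ) (h1 : θ ≤ 1) : Monotone (binCDF n θ) := by
  intro a b hab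
  unfold binCDF
  apply Finset.sum_le_sum_of_subset_of_nonneg
  · exact Finset.range_subset_range.2 (by omega)
  · intro i _ _; exact binPMF_nonneg h0 h1

lemma binCDF_sub_pmf {n k : ℕ} {θ : ℝ} :
    binCDF n θ k - binPMF n θ k = ∑ j ∈ Finset.range k, binPMF n θ j := by
  unfold binCDF
  rw [Finset.sum_range_succ]
  ring

lemma binCDF_eq_one {n k : ℕ} {θ : ℝ} (hk : n ≤ k) : binCDF n θ k = 1 := by
  unfold binCDF
  have h1 : ∑ j ∈ Finset.range (k+1), binPMF n θ j = ∑ j ∈ Finset.range (n+1), binPMF n θ j := by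
    refine (Finset.sum_subset (Finset.range_subset_range.2 (by omega)) ?_).symm
    intro x _ hx
    simp only [Finset.mem_range, not_lt] at hx
    exact binPMF_zero (by omega)
  rw [h1]
  have h2 : ∑ j ∈ Finset.range (n+1), binPMF n θ j
      = ∑ j ∈ Finset.range (n+1), θ ^ j * (1-θ) ^ (n-j) * (n.choose j : ℝ) := by
    apply Finset.sum_congr rfl; intro j _; unfold binPMF; ring
  rw [h2, ← add_pow]
  norm_num

/-- Eq. (7) of the paper for the binomial model: the CDF of the randomized p-value
`P = 1 - F_{θ*}(T) + U·f_{θ*}(T)` under parameter `θ` is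
`1 - F_θ(y(t)) + g(t)·f_θ(y(t))` for `t ∈ (0,1)`. -/
theorem stmt_12 {Ω : Type*} [MeasurableSpace Ω] (μ : Measure Ω) [IsProbabilityMeasure μ]
    (n : ℕ) (θ θstar : ℝ) (hθ : θ ∈ Ioo (0:ℝ) 1) (hθstar : θstar ∈ Ioo (0:ℝ) 1)
    (T : Ω → ℕ) (hTmeas : Measurable T)
    (hTlaw : ∀ k : ℕ, μ {ω | T ω = k} = ENNReal.ofReal (binPMF n θ k))
    (U : Ω → ℝ) (hUmeas : Measurable U)
    (hUunif : μ.map U = volume.restrict (Icc (0:ℝ) 1))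
    (hindep : IndepFun T U μ)
    (P : Ω → ℝ)
    (hP : ∀ ω, P ω = 1 - binCDF n θstar (T ω) + U ω * binPMF n θstar (T ω)) :
    ∀ t ∈ Ioo (0:ℝ) 1,
      (μ {ω | P ω ≤ t}).toReal =
        1 - binCDF n θ (binQuant n θstar t)
          + binG n θstar t * binPMF n θ (binQuant n θstar t) := by
  intro t ht
  obtain ⟨ht0, ht1⟩ := ht
  obtain ⟨hθ0, hθ1⟩ := hθ
  obtain ⟨hs0, hs1⟩ := hθstar
  have hnmem : n ∈ {k : ℕ | 1 - t ≤ binCDF n θstar k} := by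
    simp only [mem_setOf_eq, binCDF_eq_one le_rfl]; linarith
  have hFy : 1 - t ≤ binCDF n θstar (binQuant n θstar t) := Nat.sInf_mem ⟨n, hnmem⟩
  have hlt : ∀ k, k < binQuant n θstar t → binCDF n θstar k < 1 - t := by
    intro k hk
    by_contra h
    push_neg at h
    exact absurd (Nat.sInf_le h : binQuant n θstar t ≤ k) (not_le.mpr hk)
  have hyn : binQuant n θstar t ≤ n := Nat.sInf_le hnmem
  have hgdef : binG n θstar t
      = (binCDF n θstar (binQuant n θstar t) - (1 - t))
        / binPMF n θstar (binQuant n θstar t) := rfl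
  set y := binQuant n θstar t with hy
  clear_value y
  set g := binG n θstar t with hg
  clear_value g
  clear hy hg
  have hfy : 0 < binPMF n θstar y := binPMF_pos hyn ⟨hs0, hs1⟩
  have hg0 : 0 ≤ g := by
    rw [hgdef]
    exact div_nonneg (by linarith) hfy.le
  have hg1 : g ≤ 1 := by
    rw [hgdef, div_le_one hfy]
    have h := binCDF_sub_pmf (n := n) (θ := θstar) (k := y)
    rcases Nat.eq_zero_or_pos y with h0 | h0
    · rw [h0] at h ⊢
      simp only [Finset.range_zero, Finset.sum_empty] at h
      linarith
    · have he : ∑ j ∈ Finset.range y, binPMF n θstar j = binCDF n θstar (y-1) := by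
        unfold binCDF; rw [Nat.sub_add_cancel h0]
      have hl := hlt (y-1) (by omega)
      rw [he] at h
      linarith
  -- thresholds
  obtain ⟨c, hc⟩ : ∃ c : ℕ → ℝ,
      ∀ k, c k = (t - (1 - binCDF n θstar k)) / binPMF n θstar k := ⟨_, fun _ => rfl⟩
  obtain ⟨m, hm⟩ : ∃ m : ℕ → ℝ, ∀ k, m k = max 0 (min 1 (c k)) := ⟨_, fun _ => rfl⟩
  have hm0 : ∀ k, 0 ≤ m k := by intro k; rw [hm k]; exact le_max_left _ _
  -- event identities
  have hevent : ∀ k, k ≤ n → {ω | P ω ≤ t} ∩ T ⁻¹' {k} = T ⁻¹' {k} ∩ U ⁻¹' (Iic (c k)) := by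
    intro k hk
    have hfk : 0 < binPMF n θstar k := binPMF_pos hk ⟨hs0, hs1⟩
    ext ω
    simp only [mem_inter_iff, mem_setOf_eq, mem_preimage, mem_singleton_iff, mem_Iic, hP ω]
    constructor
    · rintro ⟨hPt, hT⟩
      refine ⟨hT, ?_⟩
      rw [hT] at hPt
      rw [hc k, le_div_iff₀ hfk]
      linarith
    · rintro ⟨hT, hU⟩
      refine ⟨?_, hT⟩
      rw [hT]
      rw [hc k, le_div_iff₀ hfk] at hU
      linarith
  have hevent2 : ∀ k, n < k → {ω | P ω ≤ t} ∩ T ⁻¹' {k} = T ⁻¹' {k} := by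
    intro k hk
    refine inter_eq_right.mpr ?_
    intro ω hω
    simp only [mem_preimage, mem_singleton_iff] at hω
    show P ω ≤ t
    rw [hP ω, hω, binCDF_eq_one hk.le, binPMF_zero hk]
    simp only [sub_self, mul_zero, add_zero]
    linarith
  have hTset : ∀ k : ℕ, T ⁻¹' {k} = {ω | T ω = k} := by
    intro k; ext ω; simp
  have hmeas : ∀ k : ℕ, MeasurableSet ({ω | P ω ≤ t} ∩ T ⁻¹' {k}) := by
    intro k
    rcases le_or_gt k n with hk | hk
    · rw [hevent k hk]
      exact (hTmeas (measurableSet_singleton k)).inter (hUmeas measurableSet_Iic)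
    · rw [hevent2 k hk]
      exact hTmeas (measurableSet_singleton k)
  have hUnion : {ω | P ω ≤ t} = ⋃ k : ℕ, ({ω | P ω ≤ t} ∩ T ⁻¹' {k}) := by
    ext ω
    simp only [mem_iUnion, mem_inter_iff, mem_setOf_eq, mem_preimage, mem_singleton_iff]
    constructor
    · intro h; exact ⟨T ω, h, rfl⟩
    · rintro ⟨k, h, _⟩; exact h
  have hdisj : Pairwise (Function.onFun Disjoint
      (fun k : ℕ => {ω | P ω ≤ t} ∩ T ⁻¹' {k})) := by
    intro i j hij
    refine Disjoint.mono inter_subset_right inter_subset_right ?_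
    simp only [disjoint_left, mem_preimage, mem_singleton_iff]
    rintro ω rfl h2
    exact hij h2
  have hdecomp : μ {ω | P ω ≤ t} = ∑' k : ℕ, μ ({ω | P ω ≤ t} ∩ T ⁻¹' {k}) := by
    conv_lhs => rw [hUnion]
    exact measure_iUnion hdisj hmeas
  have hterm : ∀ k : ℕ, μ ({ω | P ω ≤ t} ∩ T ⁻¹' {k})
      = ENNReal.ofReal (binPMF n θ k * m k) := by
    intro k
    rcases le_or_gt k n with hk | hk
    · rw [hevent k hk,
        hindep.measure_inter_preimage_eq_mul {k} (Iic (c k)) (measurableSet_singleton k)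
          measurableSet_Iic,
        hTset, hTlaw, ← Measure.map_apply hUmeas measurableSet_Iic, hUunif,
        Measure.restrict_apply measurableSet_Iic]
      have hI : Iic (c k) ∩ Icc (0:ℝ) 1 = Icc 0 (min 1 (c k)) := by
        ext x
        simp only [mem_inter_iff, mem_Iic, mem_Icc, le_min_iff]
        constructor
        · rintro ⟨h1, h2, h3⟩; exact ⟨h2, h3, h1⟩
        · rintro ⟨h1, h2, h3⟩; exact ⟨h3, h1, h2⟩
      rw [hI, Real.volume_Icc, sub_zero]
      have hof : ENNReal.ofReal (min 1 (c k)) = ENNReal.ofReal (m k) := by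
        rcases le_total 0 (min 1 (c k)) with h | h
        · rw [hm k, max_eq_right h]
        · rw [ENNReal.ofReal_eq_zero.2 h, hm k, max_eq_left h, ENNReal.ofReal_zero]
      rw [hof, ← ENNReal.ofReal_mul (binPMF_nonneg hθ0.le hθ1.le)]
    · rw [hevent2 k hk, hTset, hTlaw, binPMF_zero hk]
      simp
  rw [hdecomp]
  simp_rw [hterm]
  rw [tsum_eq_sum (s := Finset.range (n+1))
    (by
      intro k hk
      simp only [Finset.mem_range, not_lt] at hk
      rw [binPMF_zero (show n < k by omega), zero_mul, ENNReal.ofReal_zero])]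
  rw [← ENNReal.ofReal_sum_of_nonneg
    (fun k _ => mul_nonneg (binPMF_nonneg hθ0.le hθ1.le) (hm0 k))]
  rw [ENNReal.toReal_ofReal
    (Finset.sum_nonneg fun k _ => mul_nonneg (binPMF_nonneg hθ0.le hθ1.le) (hm0 k))]
  -- the real computation
  have hmlt : ∀ k, k < y → m k = 0 := by
    intro k hk
    have hfk : 0 < binPMF n θstar k := binPMF_pos (by omega) ⟨hs0, hs1⟩
    have hck : c k < 0 := by
      rw [hc k]
      apply div_neg_of_neg_of_pos _ hfk
      have := hlt k hk
      linarith
    rw [hm k, max_eq_left (le_of_lt (lt_of_le_of_lt (min_le_right 1 (c k)) hck))]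
  have hcy : c y = g := by
    rw [hc y, hgdef]
    congr 1
    ring
  have hmy : m y = g := by
    rw [hm y, hcy, min_eq_right hg1, max_eq_right hg0]
  have hmgt : ∀ k, y < k → k ≤ n → m k = 1 := by
    intro k hk1 hk2
    have hfk : 0 < binPMF n θstar k := binPMF_pos hk2 ⟨hs0, hs1⟩
    have hck : 1 ≤ c k := by
      rw [hc k, le_div_iff₀ hfk, one_mul]
      have h := binCDF_sub_pmf (n := n) (θ := θstar) (k := k)
      have he : ∑ j ∈ Finset.range k, binPMF n θstar j = binCDF n θstar (k-1) := by
        unfold binCDF; rw [Nat.sub_add_cancel (show 1 ≤ k by omega)]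
      have hmono := binCDF_mono (n := n) hs0.le hs1.le (show y ≤ k - 1 by omega)
      rw [he] at h
      linarith
    rw [hm k, min_eq_left hck, max_eq_right zero_le_one]
  have hsplit : Finset.range (n+1) = Finset.range (y+1) ∪ Finset.Ico (y+1) (n+1) := by
    simp only [Finset.range_eq_Ico]
    exact (Finset.Ico_union_Ico_eq_Ico (by omega) (by omega)).symm
  rw [hsplit, Finset.sum_union (by
    simp only [Finset.range_eq_Ico]
    exact Finset.Ico_disjoint_Ico_consecutive 0 (y+1) (n+1))]
  have h1 : ∑ k ∈ Finset.range (y+1), binPMF n θ k * m k = binPMF n θ y * g := by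
    rw [Finset.sum_range_succ, hmy]
    rw [Finset.sum_eq_zero, zero_add]
    intro k hk
    rw [hmlt k (Finset.mem_range.mp hk), mul_zero]
  have h2 : ∑ k ∈ Finset.Ico (y+1) (n+1), binPMF n θ k * m k = 1 - binCDF n θ y := by
    have he : ∑ k ∈ Finset.Ico (y+1) (n+1), binPMF n θ k * m k
        = ∑ k ∈ Finset.Ico (y+1) (n+1), binPMF n θ k := by
      apply Finset.sum_congr rfl
      intro k hk
      obtain ⟨hk1, hk2⟩ := Finset.mem_Ico.mp hk
      rw [hmgt k (by omega) (by omega), mul_one]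
    rw [he]
    have hsum : ∑ k ∈ Finset.range (y+1), binPMF n θ k
        + ∑ k ∈ Finset.Ico (y+1) (n+1), binPMF n θ k
        = ∑ k ∈ Finset.range (n+1), binPMF n θ k := by
      simp only [Finset.range_eq_Ico]
      exact Finset.sum_Ico_consecutive _ (by omega) (by omega)
    have hcdfn : ∑ k ∈ Finset.range (n+1), binPMF n θ k = 1 :=
      binCDF_eq_one (n := n) (θ := θ) le_rfl
    have hcdfy : ∑ k ∈ Finset.range (y+1), binPMF n θ k = binCDF n θ y := rfl
    linarith
  rw [h1, h2]
  ring
end
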